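/- arXiv:2112.06609 — 2 statements merged into one kernel-verified Lean document; each statement's English description precedes it below -/
import Mathlib

section
/- For a finite graph G, the total type Σ (x y : N_G), Σ (w : W_G(x,y)), isQuasi(w) of all quasi-simple walks is a finite set. -/
namespace HoWalk

variable {N : Type}

inductive Walk (E : N → N → Type) : N → N → Type where
  | nil (x : N) : Walk E x x
  | cons {x y z : N} (e : E x y) (w : Walk E y z) : Walk E x z

variable {E : N → N → Type}

def Walk.length : {x y : N} → Walk E x y → ℕ
  | _, _, .nil _ => 0
  | _, _, .cons _ w => w.length + 1

/-- Node membership: `y ∈ ⟨z⟩ := Empty`, `y ∈ (e ⊙ w) := (y = source e) ⊕ (y ∈ w)`. -/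
def Walk.mem (u : N) : {x y : N} → Walk E x y → Type
  | _, _, .nil _ => Empty
  | _, _, @Walk.cons _ _ a _ _ _ w => PLift (u = a) ⊕ Walk.mem u w

/-- A type is a proposition (h-prop). -/
def IsProp (X : Type) : Prop := ∀ a b : X, a = b

/-- A walk is quasi-simple if membership is propositional for every node. -/
def Walk.IsQuasi {x y : N} (w : Walk E x y) : Prop := ∀ z : N, IsProp (w.mem z)

/-- Walk concatenation. -/
def Walk.append : {x y z : N} → Walk E x y → Walk E y z → Walk E x z
  | _, _, _, .nil _, q => q
  | _, _, _, .cons e p, q => .cons e (p.append q)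

/-- A type is finite if there (merely) exists a bijection with `Fin n`. -/
def IsFiniteT (X : Type) : Prop := ∃ n : ℕ, Nonempty (X ≃ Fin n)

/-- Edge list of a walk. -/
def Walk.toList : {x y : N} → Walk E x y → List ((a : N) × (b : N) × E a b)
  | _, _, .nil _ => []
  | _, _, @Walk.cons _ _ a b _ e w => ⟨a, b, e⟩ :: w.toList

/-- Support (list of cons-sources). -/
def Walk.support : {x y : N} → Walk E x y → List N
  | _, _, .nil _ => []
  | _, _, @Walk.cons _ _ a _ _ _ w => a :: w.support

lemma Walk.length_eq_support {x y : N} (w : Walk E x y) :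
    w.length = w.support.length := by
  induction w with
  | nil => rfl
  | cons e w ih => simp [Walk.length, Walk.support, ih]

lemma Walk.mem_of_mem_support {u x y : N} (w : Walk E x y) (h : u ∈ w.support) :
    Nonempty (w.mem u) := by
  induction w with
  | nil => simp [Walk.support] at h
  | cons e w ih =>
    rcases List.mem_cons.1 h with h | h
    · exact ⟨Sum.inl ⟨h⟩⟩
    · exact ⟨Sum.inr (ih h).some⟩

lemma Walk.support_nodup {x y : N} (w : Walk E x y) (hq : w.IsQuasi) :
    w.support.Nodup := by
  induction w with
  | nil => exact List.nodup_nil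
  | cons e w ih =>
    rename_i a b c
    refine List.nodup_cons.2 ⟨fun hmem => ?_, ih fun z s t => ?_⟩
    · obtain ⟨m⟩ := w.mem_of_mem_support hmem
      have := hq a (Sum.inl ⟨rfl⟩) (Sum.inr m)
      simp at this
    · exact Sum.inr_injective (hq z (Sum.inr s) (Sum.inr t))

lemma Walk.toList_injective {x y : N} (w₁ w₂ : Walk E x y)
    (h : w₁.toList = w₂.toList) : w₁ = w₂ := by
  induction w₁ with
  | nil =>
    cases w₂ with
    | nil => rfl
    | cons e w => simp [Walk.toList] at h
  | cons e w ih =>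
    cases w₂ with
    | nil => simp [Walk.toList] at h
    | cons e' w' =>
      simp only [Walk.toList, List.cons.injEq, Sigma.mk.inj_iff, heq_eq_eq, true_and] at h
      obtain ⟨⟨rfl, h1⟩, h2⟩ := h
      obtain rfl := eq_of_heq h1
      rw [ih _ h2]

lemma Walk.length_toList {x y : N} (w : Walk E x y) :
    w.toList.length = w.length := by
  induction w with
  | nil => rfl
  | cons e w ih => simp [Walk.toList, Walk.length, ih]

/-- For a finite graph, the total type of quasi-simple walks is a finite set. -/
theorem total_quasi_walks_isFinite (N : Type) (E : N → N → Type)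
    (hN : IsFiniteT N) (hE : ∀ a b : N, IsFiniteT (E a b)) :
    IsFiniteT ((x : N) × (y : N) × (w : Walk E x y) × PLift w.IsQuasi) := by
  obtain ⟨n, ⟨eN⟩⟩ := hN
  have : Finite N := Finite.intro eN
  have : ∀ a b, Finite (E a b) := fun a b => by
    obtain ⟨m, ⟨e⟩⟩ := hE a b; exact Finite.intro e
  have hEdge : Finite ((a : N) × (b : N) × E a b) := by infer_instance
  have hcard := Fintype.ofFinite N
  set k := Fintype.card N with hk
  have hfin : Finite {l : List ((a : N) × (b : N) × E a b) | l.length ≤ k} :=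
    (List.finite_length_le _ k).to_subtype
  have hF : Finite (N × N × {l : List ((a : N) × (b : N) × E a b) | l.length ≤ k}) := by
    infer_instance
  -- injection
  have hlen : ∀ (p : (x : N) × (y : N) × (w : Walk E x y) × PLift w.IsQuasi),
      p.2.2.1.toList.length ≤ k := by
    rintro ⟨x, y, w, ⟨hq⟩⟩
    simp only
    rw [Walk.length_toList, Walk.length_eq_support]
    exact (w.support_nodup hq).length_le_card
  let F : ((x : N) × (y : N) × (w : Walk E x y) × PLift w.IsQuasi) →
      N × N × {l : List ((a : N) × (b : N) × E a b) | l.length ≤ k} :=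
    fun p => ⟨p.1, p.2.1, ⟨p.2.2.1.toList, hlen p⟩⟩
  have hFinj : Function.Injective F := by
    rintro ⟨x, y, w, hw⟩ ⟨x', y', w', hw'⟩ h
    simp only [F, Prod.mk.injEq, Subtype.mk.injEq] at h
    obtain ⟨rfl, rfl, h⟩ := h
    obtain rfl := Walk.toList_injective w w' h
    cases hw; cases hw'; rfl
  have : Finite ((x : N) × (y : N) × (w : Walk E x y) × PLift w.IsQuasi) :=
    Finite.of_injective F hFinj
  obtain ⟨m, ⟨e⟩⟩ := Finite.exists_equiv_fin ((x : N) × (y : N) × (w : Walk E x y) × PLift w.IsQuasi)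
  exact ⟨m, ⟨e⟩⟩
end HoWalk
end

section
/- If the node set of a graph G has decidable equality, then every walk w : W_G(x,z) reduces under the reflexive-transitive closure of the loop-reduction relation to a walk v in normal form, i.e., there exists v with w ⇝* v, v quasi-simple, and v admitting no further reduction. -/
namespace HoWalk

variable {N : Type}

variable {E : N → N → Type}

/-- A walk is a loop if its endpoints are equal. -/
inductive Walk.Loop : {x y : N} → Walk E x y → Prop
  | isLoop {x y : N} {w : Walk E x y} : x = y → w.Loop

/-- A walk is trivial if its length is zero. -/
inductive Walk.Trivial : {x y : N} → Walk E x y → Prop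
  | isTrivial {x y : N} {w : Walk E x y} : w.length = 0 → w.Trivial

/-- A walk is nontrivial if it has at least one edge. -/
inductive Walk.NonTrivial : {x y : N} → Walk E x y → Prop
  | hasEdge {x y z : N} {w : Walk E y z} (e : E x y) : (Walk.cons e w).NonTrivial

/-- A nontrivial loop. -/
inductive Walk.NonTrivialLoop : {x y : N} → Walk E x y → Prop
  | isLoop {x y z : N} {e : E x y} (p : x = z) (w : Walk E y z) :
      (Walk.cons e w).NonTrivialLoop

/-- The loop-reduction relation on walks. -/
inductive Red : {x y : N} → Walk E x y → Walk E x y → Prop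
  | xi1 {x y : N} (p q : Walk E x y) :
      p.NonTrivialLoop → q.Trivial → Red p q
  | xi2 {x y z : N} (e : E x y) (p q : Walk E y z) :
      ¬ (Walk.cons e p).Loop → x ≠ y → Red p q →
      Red (Walk.cons e p) (Walk.cons e q)
  | xi3 {x y z : N} (e : E x y) (p : Walk E y x) (q : Walk E x z) :
      ¬ ((Walk.cons e p).append q).Loop → (Walk.cons e p).Loop → q.NonTrivial →
      (w : Walk E x z) → w = (Walk.cons e p).append q → Red w q

/-! Normalise `e ⊙ p` from `x` by induction on its length. A loop reduces to the trivial walk by ξ₁.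
Otherwise, if `x` recurs in `p`, the segment up to its return is an attached loop that ξ₃ removes.
If `x` does not recur, normalise `p` and prepend `e` by ξ₂: reductions never add nodes, so `x` is
absent from the normal form of `p`, and that is exactly what makes the prepended walk quasi-simple
and irreducible. -/

open Relation

variable {x y z : N}

namespace Walk

theorem length_append : ∀ {a b c : N} (p : Walk E a b) (q : Walk E b c),
    (p.append q).length = p.length + q.length
  | _, _, _, .nil _, _ => (Nat.zero_add _).symm
  | _, _, _, .cons _ p, q => by simp only [append, length, length_append p q]; omega

theorem nonTrivial_of_ne : ∀ (w : Walk E x z), x ≠ z → w.NonTrivial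
  | .nil _, h => absurd rfl h
  | .cons e _, _ => .hasEdge e

theorem Trivial.not_nonempty_mem {w : Walk E x z} (h : w.Trivial) (u : N) :
    ¬ Nonempty (w.mem u) := by
  rintro ⟨m⟩
  cases w with
  | nil => exact m.elim
  | cons => cases h with | isTrivial h => exact Nat.succ_ne_zero _ h

theorem NonTrivial.nonempty_mem_start {w : Walk E x z} : w.NonTrivial → Nonempty (w.mem x)
  | .hasEdge _ => ⟨Sum.inl ⟨rfl⟩⟩

theorem nonempty_mem_append_right {u : N} : ∀ {a b c : N} (p : Walk E a b) (q : Walk E b c),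
    Nonempty (q.mem u) → Nonempty ((p.append q).mem u)
  | _, _, _, .nil _, _, h => h
  | _, _, _, .cons _ p, q, h => (nonempty_mem_append_right p q h).map Sum.inr

theorem exists_eq_append_of_mem {u : N} : ∀ {a b : N} (p : Walk E a b), Nonempty (p.mem u) →
    ∃ (p₁ : Walk E a u) (p₂ : Walk E u b), p = p₁.append p₂
  | _, _, .nil _, ⟨m⟩ => m.elim
  | _, _, .cons e p, ⟨m⟩ => by
      rcases (m : PLift _ ⊕ p.mem u) with ⟨⟨rfl⟩⟩ | m
      · exact ⟨.nil _, .cons e p, rfl⟩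
      · obtain ⟨p₁, p₂, rfl⟩ := exists_eq_append_of_mem p ⟨m⟩
        exact ⟨.cons e p₁, p₂, rfl⟩

theorem isQuasi_nil (a : N) : (nil a : Walk E a a).IsQuasi := fun _ m _ => m.elim

theorem IsQuasi.cons {v : Walk E y z} (hv : v.IsQuasi) (hx : ¬ Nonempty (v.mem x)) (e : E x y) :
    (cons e v).IsQuasi := by
  intro u (a : PLift (u = x) ⊕ v.mem u) (b : PLift (u = x) ⊕ v.mem u)
  rcases a with ⟨⟨rfl⟩⟩ | a <;> rcases b with ⟨⟨hb⟩⟩ | b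
  · rfl
  · exact (hx ⟨b⟩).elim
  · exact (hx ⟨hb ▸ a⟩).elim
  · exact congrArg Sum.inr (hv u a b)

def IsNormal (v : Walk E x z) : Prop := v.IsQuasi ∧ ¬ ∃ u, Red v u

theorem not_red_nil (a : N) : ¬ ∃ u, Red (nil a : Walk E a a) u := by
  rintro ⟨u, h⟩
  cases h with
  | xi1 _ _ hloop => cases hloop
  | xi3 _ _ _ _ _ _ _ hw => cases hw

theorem isNormal_nil (a : N) : (nil a : Walk E a a).IsNormal := ⟨isQuasi_nil a, not_red_nil a⟩

theorem not_red_cons {v : Walk E y z} (hxz : x ≠ z) (hx : ¬ Nonempty (v.mem x))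
    (hv : ¬ ∃ u, Red v u) (e : E x y) : ¬ ∃ u, Red (cons e v) u := by
  rintro ⟨u, h⟩
  cases h with
  | xi1 _ _ hloop => cases hloop with | isLoop h _ => exact hxz h
  | xi2 _ _ u _ _ h => exact hv ⟨u, h⟩
  | xi3 _ p _ _ _ hu _ hw =>
      cases hw
      exact hx (nonempty_mem_append_right p u hu.nonempty_mem_start)

theorem IsNormal.cons {v : Walk E y z} (hv : v.IsNormal) (hxz : x ≠ z)
    (hx : ¬ Nonempty (v.mem x)) (e : E x y) : (cons e v).IsNormal :=
  ⟨hv.1.cons hx e, not_red_cons hxz hx hv.2 e⟩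

end Walk

open Walk

theorem Red.nonempty_mem {a b : Walk E x z} (h : Red a b) {u : N} :
    Nonempty (b.mem u) → Nonempty (a.mem u) := by
  induction h with
  | xi1 _ _ _ hq => exact fun hm => (hq.not_nonempty_mem u hm).elim
  | xi2 _ _ _ _ _ _ ih => rintro ⟨m | m⟩; exacts [⟨Sum.inl m⟩, (ih ⟨m⟩).map Sum.inr]
  | xi3 _ p q _ _ _ _ hw => subst hw; exact fun hm => (nonempty_mem_append_right p q hm).map Sum.inr

theorem nonempty_mem_of_reflTransGen {a b : Walk E x z} (h : ReflTransGen Red a b) {u : N}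
    (hb : Nonempty (b.mem u)) : Nonempty (a.mem u) := by
  induction h with
  | refl => exact hb
  | tail _ hstep ih => exact ih (hstep.nonempty_mem hb)

theorem red_cons_nil (e : E x y) (p : Walk E y x) : Red (cons e p) (nil x) :=
  .xi1 _ _ (.isLoop rfl p) (.isTrivial rfl)

theorem red_cons_append_of_ne (hxz : x ≠ z) (e : E x y) (p₁ : Walk E y x) (p₂ : Walk E x z) :
    Red (cons e (p₁.append p₂)) p₂ :=
  .xi3 e p₁ p₂ (fun ⟨h⟩ => hxz h) ⟨rfl⟩ (p₂.nonTrivial_of_ne hxz) _ rfl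

theorem reflTransGen_red_cons (hxz : x ≠ z) (hxy : x ≠ y) (e : E x y) {p v : Walk E y z}
    (h : ReflTransGen Red p v) : ReflTransGen Red (cons e p) (cons e v) :=
  h.lift (cons e) fun _ _ hr => .xi2 e _ _ (fun ⟨h⟩ => hxz h) hxy hr

theorem Walk.exists_reflTransGen_isNormal : ∀ {x z : N} (w : Walk E x z),
    ∃ v, ReflTransGen Red w v ∧ v.IsNormal
  | _, _, .nil x => ⟨nil x, .refl, isNormal_nil x⟩
  | x, z, .cons (y := y) e p => by
      by_cases hxz : x = z
      · subst hxz
        exact ⟨nil x, .single (red_cons_nil e p), isNormal_nil x⟩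
      by_cases hx : Nonempty (p.mem x)
      · obtain ⟨p₁, p₂, hp⟩ := p.exists_eq_append_of_mem hx
        have : p₂.length < p.length + 1 := by rw [hp, length_append]; omega
        obtain ⟨v, hv, hn⟩ := p₂.exists_reflTransGen_isNormal
        subst hp
        exact ⟨v, .head (red_cons_append_of_ne hxz e p₁ p₂) hv, hn⟩
      · have hxy : x ≠ y := by
          rintro rfl
          exact hx (p.nonTrivial_of_ne hxz).nonempty_mem_start
        obtain ⟨v, hv, hn⟩ := p.exists_reflTransGen_isNormal
        exact ⟨cons e v, reflTransGen_red_cons hxz hxy e hv,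
          hn.cons hxz (fun h => hx (nonempty_mem_of_reflTransGen hv h)) e⟩
termination_by _ _ w => w.length
decreasing_by all_goals simp only [length]; omega

theorem normalisation_general (N : Type) (E : N → N → Type)
    {x z : N} (w : Walk E x z) :
    ∃ v : Walk E x z,
      Relation.ReflTransGen (fun a b : Walk E x z => Red a b) w v ∧
      v.IsQuasi ∧ ¬ ∃ u : Walk E x z, Red v u :=
  w.exists_reflTransGen_isNormal

/-- Normalisation: with decidable node equality, every walk reduces (under the
reflexive-transitive closure of loop-reduction) to a normal form: a quasi-simple
walk admitting no further reduction. -/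
theorem normalisation (N : Type) (E : N → N → Type) [DecidableEq N]
    {x z : N} (w : Walk E x z) :
    ∃ v : Walk E x z,
      Relation.ReflTransGen (fun a b : Walk E x z => Red a b) w v ∧
      v.IsQuasi ∧ ¬ ∃ u : Walk E x z, Red v u :=
  normalisation_general N E w
end HoWalk
end
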